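/- arXiv:1107.0545 — 7 statements merged into one kernel-verified Lean document; each statement's English description precedes it below -/
import Mathlib

section
/- Let G be a group with a left ordering <_G whose positive cone is generated as a semigroup by a finite set 𝒢 = {g_1,...,g_m}, with g_1 the <_G-minimal element of 𝒢. Then <_G is right invariant under multiplication by g_1: a <_G b implies a·g_1 <_G b·g_1 for all a, b ∈ G. -/
theorem g1_right_invariant {G : Type*} [Group G] [LinearOrder G]
    (hleft : ∀ a b c : G, a < b → c * a < c * b)
    (𝒢 : Finset G)
    (hcone : {a : G | 1 < a} = (Subsemigroup.closure (𝒢 : Set G) : Set G))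
    (g₁ : G) (hg₁ : g₁ ∈ 𝒢) (hmin : ∀ g ∈ 𝒢, g₁ ≤ g) :
    ∀ a b : G, a < b → a * g₁ < b * g₁ := by
  have hle : ∀ a b c : G, a ≤ b → c * a ≤ c * b := by
    intro a b c h
    rcases h.lt_or_eq with h | h
    · exact (hleft _ _ _ h).le
    · rw [h]
  have hpos : ∀ g ∈ Subsemigroup.closure (𝒢 : Set G), (1 : G) < g := by
    intro g hg
    have : g ∈ {a : G | 1 < a} := hcone ▸ hg
    exact this
  have hg₁pos : (1 : G) < g₁ := hpos g₁ (Subsemigroup.subset_closure hg₁)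
  -- every element of the closure is ≥ g₁
  have hclos : ∀ c ∈ Subsemigroup.closure (𝒢 : Set G), g₁ ≤ c := by
    intro c hc
    induction hc using Subsemigroup.closure_induction with
    | mem x hx => exact hmin x hx
    | mul x y hx hy ihx ihy =>
        have h1 : (1 : G) < y := hpos y hy
        exact le_of_lt <| calc g₁ ≤ x := ihx
          _ = x * 1 := (mul_one x).symm
          _ < x * y := hleft _ _ _ h1
  -- conjugation of a generator by g₁ is positive
  have hconjgen : ∀ g ∈ 𝒢, (1 : G) < g₁⁻¹ * g * g₁ := by
    intro g hg
    rcases eq_or_lt_of_le (hmin g hg) with h | h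
    · rw [← h]; simpa using hg₁pos
    · -- g₁ < g : then g₁⁻¹ * g is positive, hence in the closure, hence ≥ g₁
      have h1 : (1 : G) < g₁⁻¹ * g := by
        have := hleft _ _ g₁⁻¹ h
        simpa using this
      have h2 : g₁⁻¹ * g ∈ Subsemigroup.closure (𝒢 : Set G) := by
        have : g₁⁻¹ * g ∈ {a : G | 1 < a} := h1
        rwa [hcone] at this
      have h3 : g₁ ≤ g₁⁻¹ * g := hclos _ h2
      have h4 : g₁ * g₁ ≤ g := by
        have := hle _ _ g₁ h3
        simpa [mul_assoc] using this
      have h5 : g₁ < g * g₁ := calc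
        g₁ = g₁ * 1 := (mul_one g₁).symm
        _ < g₁ * g₁ := hleft _ _ _ hg₁pos
        _ ≤ g := h4
        _ = g * 1 := (mul_one g).symm
        _ < g * g₁ := hleft _ _ _ hg₁pos
      have := hleft _ _ g₁⁻¹ h5
      simpa [mul_assoc] using this
  -- conjugation of any positive element by g₁ is positive
  have hconj : ∀ c : G, 1 < c → (1 : G) < g₁⁻¹ * c * g₁ := by
    intro c hc
    have hc' : c ∈ Subsemigroup.closure (𝒢 : Set G) := by
      have : c ∈ {a : G | 1 < a} := hc
      rwa [hcone] at this
    induction hc' using Subsemigroup.closure_induction with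
    | mem x hx => exact hconjgen x hx
    | mul x y hx hy ihx ihy =>
        have ihx' := ihx (hpos x hx)
        have ihy' := ihy (hpos y hy)
        have : (1 : G) < (g₁⁻¹ * x * g₁) * (g₁⁻¹ * y * g₁) :=
          calc (1 : G) < g₁⁻¹ * x * g₁ := ihx'
            _ = (g₁⁻¹ * x * g₁) * 1 := (mul_one _).symm
            _ < (g₁⁻¹ * x * g₁) * (g₁⁻¹ * y * g₁) := hleft _ _ _ ihy'
        have heq : (g₁⁻¹ * x * g₁) * (g₁⁻¹ * y * g₁) = g₁⁻¹ * (x * y) * g₁ := by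
          group
        rwa [heq] at this
  intro a b hab
  have h1 : (1 : G) < a⁻¹ * b := by
    have := hleft _ _ a⁻¹ hab
    simpa using this
  have h2 := hconj _ h1
  have h3 := hleft _ _ (a * g₁) h2
  calc a * g₁ = a * g₁ * 1 := (mul_one _).symm
    _ < a * g₁ * (g₁⁻¹ * (a⁻¹ * b) * g₁) := h3
    _ = b * g₁ := by group
end

section
/- Let <_H be a discrete left ordering of a group H with <_H-minimal positive element h_1. If <_H is right invariant under multiplication by an element h ∈ H (i.e., a <_H b implies ah <_H bh), then h commutes with h_1. -/
theorem commutes_with_minimal {H : Type*} [Group H] [LinearOrder H]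
    (hleft : ∀ a b c : H, a < b → c * a < c * b)
    (h₁ : H) (h₁pos : 1 < h₁) (h₁min : ∀ g : H, 1 < g → h₁ ≤ g)
    (h : H) (hinv : ∀ a b : H, a < b → a * h < b * h) :
    h * h₁ = h₁ * h := by
  have hinvle : ∀ a b : H, a ≤ b → a * h ≤ b * h := by
    intro a b hab
    rcases hab.lt_or_eq with hlt | rfl
    · exact (hinv _ _ hlt).le
    · exact le_rfl
  have hleftle : ∀ a b c : H, a ≤ b → c * a ≤ c * b := by
    intro a b c hab
    rcases hab.lt_or_eq with hlt | rfl
    · exact (hleft _ _ c hlt).le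
    · exact le_rfl
  have hinv' : ∀ a b : H, a < b → a * h⁻¹ < b * h⁻¹ := by
    intro a b hab
    by_contra hc
    push_neg at hc
    have := hinvle _ _ hc
    simp only [inv_mul_cancel_right] at this
    exact absurd hab (not_lt.2 this)
  have g1 : 1 < h⁻¹ * h₁ * h := by
    have h2 := hinv _ _ (hleft _ _ h⁻¹ h₁pos)
    simpa using h2
  have g2 : 1 < h * h₁ * h⁻¹ := by
    have h2 := hinv' _ _ (hleft _ _ h h₁pos)
    simpa using h2
  have le1 : h₁ ≤ h⁻¹ * h₁ * h := h₁min _ g1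
  have le2 : h⁻¹ * h₁ * h ≤ h₁ := by
    have := hinvle _ _ (hleftle _ _ h⁻¹ (h₁min _ g2))
    simpa [mul_assoc, eq_comm] using this
  have : h⁻¹ * h₁ * h = h₁ := le_antisymm le2 le1
  have := congrArg (fun x => h * x) this
  simpa [mul_assoc, eq_comm] using this
end

section
/- In Theorem 1 (partially central cyclic amalgamation), the isolated ordering <_X of X = G *_Z H does not depend on the choice of the finite generating sets 𝒢 of P(<_G) and ℋ of P(<_H) satisfying the cofinality assumptions: any two such choices of generating sets yield the same subsemigroup of X, hence the same positive cone. -/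
/-- `P` is the positive cone of a left ordering of `G`. -/
def IsLeftOrderPositiveCone {G : Type} [Group G] (P : Set G) : Prop :=
  ∃ r : G → G → Prop, IsStrictTotalOrder G r ∧
    (∀ a b c : G, r a b → r (c * a) (c * b)) ∧ P = {g : G | r 1 g}

/-- `X`, together with `ιG` and `ιH`, is the amalgamated free product
`G *_{⟨zG = zH⟩} H`, characterized by its universal property. -/
structure IsAmalgamatedProduct {G H X : Type} [Group G] [Group H] [Group X]
    (zG : G) (zH : H) (ιG : G →* X) (ιH : H →* X) : Prop where
  eq : ιG zG = ιH zH
  ind : ∀ {K : Type} [Group K] (f : G →* K) (f' : H →* K), f zG = f' zH →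
      ∃! φ : X →* K, φ.comp ιG = f ∧ φ.comp ιH = f'

/-- Elements of the closure of the range of a strictly monotone family generating
the positive cone are positive and at least the smallest generator. -/
lemma min_pos_elem {H : Type} [Group H] [LinearOrder H]
    (hH : ∀ a b c : H, a < b → c * a < c * b)
    (n : ℕ) (h : Fin (n + 1) → H) (hhmono : StrictMono h)
    (hhcone : {a : H | 1 < a} = (Subsemigroup.closure (Set.range h) : Set H)) :
    ∀ a : H, 1 < a → h 0 ≤ a := by
  have key : ∀ x ∈ Subsemigroup.closure (Set.range h), 1 < x ∧ h 0 ≤ x := by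
    intro x hx
    induction hx using Subsemigroup.closure_induction with
    | mem x hx =>
      obtain ⟨j, rfl⟩ := hx
      have h1 : h j ∈ Subsemigroup.closure (Set.range h) :=
        Subsemigroup.subset_closure ⟨j, rfl⟩
      have h2 : 1 < h j := (Set.ext_iff.mp hhcone (h j)).mpr h1
      exact ⟨h2, hhmono.monotone (Fin.zero_le j)⟩
    | mul x y hx hy ihx ihy =>
      obtain ⟨hx1, hx0⟩ := ihx
      obtain ⟨hy1, hy0⟩ := ihy
      have : x * 1 < x * y := hH 1 y x hy1
      rw [mul_one] at this
      exact ⟨lt_trans hx1 this, le_trans hx0 (le_of_lt this)⟩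
  intro a ha
  exact (key a ((Set.ext_iff.mp hhcone a).mp ha)).2

/-- One inclusion of the main theorem. -/
lemma aux_incl
    {G H X : Type} [Group G] [Group H] [Group X]
    [LinearOrder G] [LinearOrder H]
    (hG : ∀ a b c : G, a < b → c * a < c * b)
    (hH : ∀ a b c : H, a < b → c * a < c * b)
    (zH : H)
    (m n : ℕ) (g : Fin (m + 1) → G) (h : Fin (n + 1) → H)
    (hhmono : StrictMono h)
    (hgcone : {a : G | 1 < a} = (Subsemigroup.closure (Set.range g) : Set G))
    (hhcone : {a : H | 1 < a} = (Subsemigroup.closure (Set.range h) : Set H))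
    (hCFH : ∀ j, h j < zH)
    (ιG : G →* X) (ιH : H →* X)
    (m' n' : ℕ) (g' : Fin (m' + 1) → G) (h' : Fin (n' + 1) → H)
    (hhmono' : StrictMono h')
    (hgcone' : {a : G | 1 < a} = (Subsemigroup.closure (Set.range g') : Set G))
    (hhcone' : {a : H | 1 < a} = (Subsemigroup.closure (Set.range h') : Set H)) :
    Subsemigroup.closure
        (Set.range (fun i => ιG (g' i) * (ιH zH)⁻¹ * ιH (h' 0)) ∪
          Set.range (fun j => ιH (h' j))) ≤
      Subsemigroup.closure
        (Set.range (fun i => ιG (g i) * (ιH zH)⁻¹ * ιH (h 0)) ∪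
          Set.range (fun j => ιH (h j))) := by
  set S := Subsemigroup.closure
      (Set.range (fun i => ιG (g i) * (ιH zH)⁻¹ * ιH (h 0)) ∪
        Set.range (fun j => ιH (h j))) with hS
  -- `ιH` of any positive element of `H` lies in `S`.
  have hιH0 : ∀ a ∈ Subsemigroup.closure (Set.range h), ιH a ∈ S := by
    intro a hmem
    induction hmem using Subsemigroup.closure_induction with
    | mem x hx =>
      obtain ⟨j, rfl⟩ := hx
      exact Subsemigroup.subset_closure (Set.mem_union_right _ ⟨j, rfl⟩)
    | mul x y hx hy ihx ihy =>
      rw [map_mul]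
      exact mul_mem ihx ihy
  have hιH : ∀ a : H, 1 < a → ιH a ∈ S := fun a ha =>
    hιH0 a ((Set.ext_iff.mp hhcone a).mp ha)
  -- the minimal positive elements agree
  have hmin : h' 0 = h 0 := by
    have h1 : (1 : H) < h 0 := by
      exact (Set.ext_iff.mp hhcone (h 0)).mpr (Subsemigroup.subset_closure ⟨0, rfl⟩)
    have h1' : (1 : H) < h' 0 := by
      exact (Set.ext_iff.mp hhcone' (h' 0)).mpr (Subsemigroup.subset_closure ⟨0, rfl⟩)
    exact le_antisymm (min_pos_elem hH n' h' hhmono' hhcone' (h 0) h1)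
      (min_pos_elem hH n h hhmono hhcone (h' 0) h1')
  -- the "displaced" elements for any positive `a ∈ G` lie in `S`
  have hy0 : ∀ a ∈ Subsemigroup.closure (Set.range g),
      ιG a * (ιH zH)⁻¹ * ιH (h 0) ∈ S := by
    intro a hmem
    induction hmem using Subsemigroup.closure_induction with
    | mem x hx =>
      obtain ⟨i, rfl⟩ := hx
      exact Subsemigroup.subset_closure (Set.mem_union_left _ ⟨i, rfl⟩)
    | mul x y hx hy ihx ihy =>
      have hpos : (1 : H) < (h 0)⁻¹ * zH := by
        have := hH (h 0) zH (h 0)⁻¹ (hCFH 0)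
        rwa [inv_mul_cancel] at this
      have hw : ιH ((h 0)⁻¹ * zH) ∈ S := hιH _ hpos
      have hkey : (ιG x * (ιH zH)⁻¹ * ιH (h 0)) * ιH ((h 0)⁻¹ * zH) *
          (ιG y * (ιH zH)⁻¹ * ιH (h 0)) = ιG (x * y) * (ιH zH)⁻¹ * ιH (h 0) := by
        rw [map_mul ιH, map_mul ιG, map_inv ιH]
        group
      rw [← hkey]
      exact mul_mem (mul_mem ihx hw) ihy
  have hy : ∀ a : G, 1 < a → ιG a * (ιH zH)⁻¹ * ιH (h 0) ∈ S := fun a ha =>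
    hy0 a ((Set.ext_iff.mp hgcone a).mp ha)
  -- conclude
  rw [Subsemigroup.closure_le]
  rintro x (⟨i, rfl⟩ | ⟨j, rfl⟩)
  · have hpos : (1 : G) < g' i := by
      exact (Set.ext_iff.mp hgcone' (g' i)).mpr (Subsemigroup.subset_closure ⟨i, rfl⟩)
    rw [hmin]
    exact hy (g' i) hpos
  · have hpos : (1 : H) < h' j := by
      exact (Set.ext_iff.mp hhcone' (h' j)).mpr (Subsemigroup.subset_closure ⟨j, rfl⟩)
    exact hιH _ hpos

theorem ordering_independent_of_generating_sets
    {G H X : Type} [Group G] [Group H] [Group X]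
    [LinearOrder G] [LinearOrder H]
    (hG : ∀ a b c : G, a < b → c * a < c * b)
    (hH : ∀ a b c : H, a < b → c * a < c * b)
    (zG : G) (zH : H) (hzG : zG ≠ 1) (hzH : zH ≠ 1)
    (hcen : ∀ a : G, zG * a = a * zG)
    (m n : ℕ) (g : Fin (m + 1) → G) (h : Fin (n + 1) → H)
    (hgmono : StrictMono g) (hhmono : StrictMono h)
    (hgcone : {a : G | 1 < a} = (Subsemigroup.closure (Set.range g) : Set G))
    (hhcone : {a : H | 1 < a} = (Subsemigroup.closure (Set.range h) : Set H))
    (hCFG : ∀ i, g i < zG) (hCFH : ∀ j, h j < zH)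
    (hINV : ∀ a b : H, a < b → a * zH < b * zH)
    (ιG : G →* X) (ιH : H →* X)
    (ham : IsAmalgamatedProduct zG zH ιG ιH)
    (m' n' : ℕ) (g' : Fin (m' + 1) → G) (h' : Fin (n' + 1) → H)
    (hgmono' : StrictMono g') (hhmono' : StrictMono h')
    (hgcone' : {a : G | 1 < a} = (Subsemigroup.closure (Set.range g') : Set G))
    (hhcone' : {a : H | 1 < a} = (Subsemigroup.closure (Set.range h') : Set H))
    (hCFG' : ∀ i, g' i < zG) (hCFH' : ∀ j, h' j < zH) :
    Subsemigroup.closure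
        (Set.range (fun i => ιG (g i) * (ιH zH)⁻¹ * ιH (h 0)) ∪
          Set.range (fun j => ιH (h j))) =
      Subsemigroup.closure
        (Set.range (fun i => ιG (g' i) * (ιH zH)⁻¹ * ιH (h' 0)) ∪
          Set.range (fun j => ιH (h' j))) := by
  apply le_antisymm
  · exact aux_incl hG hH zH m' n' g' h' hhmono' hgcone' hhcone' hCFH' ιG ιH
      m n g h hhmono hgcone hhcone
  · exact aux_incl hG hH zH m n g h hhmono hgcone hhcone hCFH ιG ιH
      m' n' g' h' hhmono' hgcone' hhcone'
end

section
/- In Theorem 1, the natural inclusions ι_G : G → X and ι_H : H → X into the amalgamated free product X = G *_{⟨z_G = z_H⟩} H are order-preserving with respect to <_G, <_H and the constructed isolated ordering <_X: if a <_G b then ι_G(a) <_X ι_G(b), and if a <_H b then ι_H(a) <_X ι_H(b). -/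
theorem inclusions_order_preserving
    {G H X : Type} [Group G] [Group H] [Group X]
    [LinearOrder G] [LinearOrder H]
    (hG : ∀ a b c : G, a < b → c * a < c * b)
    (hH : ∀ a b c : H, a < b → c * a < c * b)
    (zG : G) (zH : H) (hzG : zG ≠ 1) (hzH : zH ≠ 1)
    (hcen : ∀ a : G, zG * a = a * zG)
    (m n : ℕ) (g : Fin (m + 1) → G) (h : Fin (n + 1) → H)
    (hgmono : StrictMono g) (hhmono : StrictMono h)
    (hgcone : {a : G | 1 < a} = (Subsemigroup.closure (Set.range g) : Set G))
    (hhcone : {a : H | 1 < a} = (Subsemigroup.closure (Set.range h) : Set H))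
    (hCFG : ∀ i, g i < zG) (hCFH : ∀ j, h j < zH)
    (hINV : ∀ a b : H, a < b → a * zH < b * zH)
    (ιG : G →* X) (ιH : H →* X)
    (ham : IsAmalgamatedProduct zG zH ιG ιH)
    :
    let x : Fin (m + 1) → X := fun i => ιG (g i) * (ιH zH)⁻¹ * ιH (h 0)
    let PX : Subsemigroup X :=
      Subsemigroup.closure (Set.range x ∪ Set.range (fun j => ιH (h j)))
    (∀ a b : G, a < b → (ιG a)⁻¹ * ιG b ∈ PX) ∧
    (∀ a b : H, a < b → (ιH a)⁻¹ * ιH b ∈ PX) := by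
  intro x PX
  have hHmem : ∀ c : H, 1 < c → ιH c ∈ PX := by
    intro c hc
    have hc' : c ∈ Subsemigroup.closure (Set.range h) := by
      have : c ∈ {a : H | 1 < a} := hc
      rwa [hhcone] at this
    refine Subsemigroup.closure_induction ?_ ?_ hc'
    · rintro y ⟨j, rfl⟩
      exact Subsemigroup.subset_closure (Or.inr ⟨j, rfl⟩)
    · intro a b _ _ ha hb
      rw [map_mul]; exact mul_mem ha hb
  have hGmem : ∀ c : G, 1 < c → ιG c ∈ PX := by
    intro c hc
    have hc' : c ∈ Subsemigroup.closure (Set.range g) := by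
      have : c ∈ {a : G | 1 < a} := hc
      rwa [hgcone] at this
    refine Subsemigroup.closure_induction ?_ ?_ hc'
    · rintro y ⟨i, rfl⟩
      have hpos : (1 : H) < (h 0)⁻¹ * zH := by
        have := hH (h 0) zH (h 0)⁻¹ (hCFH 0)
        simpa using this
      have heq : ιG (g i) = x i * ιH ((h 0)⁻¹ * zH) := by
        simp only [x, map_mul, map_inv]
        group
      rw [heq]
      exact mul_mem (Subsemigroup.subset_closure (Or.inl ⟨i, rfl⟩)) (hHmem _ hpos)
    · intro a b _ _ ha hb
      rw [map_mul]; exact mul_mem ha hb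
  constructor
  · intro a b hab
    have h1 : (1 : G) < a⁻¹ * b := by simpa using hG a b a⁻¹ hab
    simpa [map_mul, map_inv] using hGmem _ h1
  · intro a b hab
    have h1 : (1 : H) < a⁻¹ * b := by simpa using hH a b a⁻¹ hab
    simpa [map_mul, map_inv] using hHmem _ h1
end

section
/- In Theorem 1, the constructed ordering <_X satisfies 1 <_X x_1 <_X ... <_X x_m <_X h_1 <_X ... <_X h_n <_X z, where z = z_G = z_H; moreover z is <_X-positive cofinal and <_X is right invariant under multiplication by z. -/
section LeftOrdered

variable {K : Type*} [Group K] [LinearOrder K] [MulLeftStrictMono K]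

theorem mem_normalizer_one_lt_of_strictMono_mul_right {c : K} (hc : StrictMono (· * c)) :
    c ∈ Subgroup.normalizer {a : K | 1 < a} := fun a => by
  show 1 < a ↔ 1 < c * a * c⁻¹
  rw [← hc.lt_iff_lt (b := c * a * c⁻¹)]
  simp only [one_mul, inv_mul_cancel_right, lt_mul_iff_one_lt_right']

theorem isLeast_one_lt_of_eq_closure {s : Set K}
    (hcone : {a : K | 1 < a} = Subsemigroup.closure s) {m : K} (hms : m ∈ s)
    (hm : ∀ t ∈ s, m ≤ t) : IsLeast {a : K | 1 < a} m := by
  refine ⟨(Set.ext_iff.mp hcone m).mpr (Subsemigroup.subset_closure hms), fun b hb => ?_⟩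
  induction (Set.ext_iff.mp hcone b).mp hb using Subsemigroup.closure_induction with
  | mem t ht => exact hm t ht
  | mul y w hy hw ihy _ =>
    have hw₁ : 1 < w := (Set.ext_iff.mp hcone w).mpr hw
    exact (ihy ((Set.ext_iff.mp hcone y).mpr hy)).trans (lt_mul_of_one_lt_right' y hw₁).le

/-- Conjugation by `c` is an order automorphism preserving the positive cone, so it fixes the
least positive element. -/
theorem commute_of_isLeast_one_lt {c m : K} (hc : StrictMono (· * c))
    (hm : IsLeast {a : K | 1 < a} m) : Commute c m := by
  have hN := mem_normalizer_one_lt_of_strictMono_mul_right hc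
  have hconj : StrictMono fun a => c⁻¹ * a * c := fun a b hab => hc (mul_lt_mul_right hab c⁻¹)
  have h₁ : m ≤ c⁻¹ * m * c := hm.2 ((Subgroup.mem_set_normalizer_iff''.mp hN m).mp hm.1)
  have h₂ : c⁻¹ * m * c ≤ m := by
    have : m ≤ c * m * c⁻¹ := hm.2 ((Subgroup.mem_set_normalizer_iff.mp hN m).mp hm.1)
    simpa [mul_assoc] using hconj.monotone this
  have : c⁻¹ * m * c = m := le_antisymm h₂ h₁
  rw [Commute, SemiconjBy]
  nth_rewrite 1 [← this]
  group

theorem exists_lt_pow_of_eq_closure {s : Set K}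
    (hcone : {a : K | 1 < a} = Subsemigroup.closure s) {c : K} (hc : StrictMono (· * c))
    (hc₁ : 1 < c) (hsc : ∀ t ∈ s, t < c) (b : K) : ∃ r : ℕ, b < c ^ r := by
  rcases le_or_gt b 1 with hb | hb
  · exact ⟨1, hb.trans_lt (by simpa using hc₁)⟩
  induction (Set.ext_iff.mp hcone b).mp hb using Subsemigroup.closure_induction with
  | mem t ht => exact ⟨1, by simpa using hsc t ht⟩
  | mul y w hy hw ihy ihw =>
    obtain ⟨r₁, hr₁⟩ := ihy ((Set.ext_iff.mp hcone y).mpr hy)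
    obtain ⟨r₂, hr₂⟩ := ihw ((Set.ext_iff.mp hcone w).mpr hw)
    refine ⟨r₁ + r₂, ?_⟩
    have hcr : StrictMono (· * c ^ r₂) := mul_right_iterate c r₂ ▸ hc.iterate r₂
    calc y * w < y * c ^ r₂ := mul_lt_mul_right hr₂ y
      _ < c ^ r₁ * c ^ r₂ := hcr hr₁
      _ = c ^ (r₁ + r₂) := (pow_add c r₁ r₂).symm

end LeftOrdered

theorem map_mem_of_mem_closure {M N F : Type*} [Mul M] [Mul N] [FunLike F M N]
    [MulHomClass F M N] (f : F) {s : Set M} {P : Subsemigroup N} (hs : ∀ t ∈ s, f t ∈ P)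
    {a : M} (ha : a ∈ Subsemigroup.closure s) : f a ∈ P :=
  Subsemigroup.closure_le (S := P.comap (f : M →ₙ* N)) |>.mpr hs ha

section Group

variable {X : Type*} [Group X]

theorem inv_mul_mem_trans {P : Subsemigroup X} {a b c : X} (hab : a⁻¹ * b ∈ P)
    (hbc : b⁻¹ * c ∈ P) : a⁻¹ * c ∈ P := by
  simpa [mul_assoc] using mul_mem hab hbc

theorem inv_mul_mul_mem_of_mem_normalizer {P : Subsemigroup X} {z a b : X}
    (hz : z ∈ Subgroup.normalizer (P : Set X)) (hab : a⁻¹ * b ∈ P) :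
    (a * z)⁻¹ * (b * z) ∈ P := by
  rw [show (a * z)⁻¹ * (b * z) = z⁻¹ * (a⁻¹ * b) * z by group]
  exact (Subgroup.mem_set_normalizer_iff''.mp hz _).mp hab

theorem mem_normalizer_closure_of_conj_mem {s : Set X} {c : X}
    (h₁ : ∀ t ∈ s, c * t * c⁻¹ ∈ Subsemigroup.closure s)
    (h₂ : ∀ t ∈ s, c⁻¹ * t * c ∈ Subsemigroup.closure s) :
    c ∈ Subgroup.normalizer (Subsemigroup.closure s : Set X) := by
  refine fun w => ⟨fun hw => ?_, fun hw => ?_⟩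
  · simpa using map_mem_of_mem_closure (MulAut.conj c) (by simpa using h₁) hw
  · simpa [mul_assoc] using map_mem_of_mem_closure (MulAut.conj c⁻¹) (by simpa using h₂) hw

/-- Right invariance under all powers of `z` lets the bounds of two elements be multiplied. -/
theorem exists_zpow_bounds_of_closure_eq_top {P : Subsemigroup X} {z : X} (hz : z ∈ P)
    (hzN : z ∈ Subgroup.normalizer (P : Set X)) {s : Set X} (hs : Subgroup.closure s = ⊤)
    (hbound : ∀ y ∈ s, ∃ K : ℤ, y⁻¹ * z ^ K ∈ P)
    (hbound_inv : ∀ y ∈ s, ∃ K : ℤ, y * z ^ K ∈ P) (y : X) :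
    ∃ k K : ℤ, (z ^ k)⁻¹ * y ∈ P ∧ y⁻¹ * z ^ K ∈ P := by
  have conj_mem (t : ℤ) {w : X} (hw : w ∈ P) : z ^ t * w * (z ^ t)⁻¹ ∈ P :=
    (Subgroup.mem_set_normalizer_iff.mp (Subgroup.zpow_mem _ hzN t) w).mp hw
  have upper (y : X) : ∃ K : ℤ, y⁻¹ * z ^ K ∈ P := by
    induction (hs ▸ Subgroup.mem_top y : y ∈ Subgroup.closure s)
      using Subgroup.closure_induction'' with
    | mem y hy => exact hbound y hy
    | inv_mem y hy => simpa using hbound_inv y hy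
    | one => exact ⟨1, by simpa using hz⟩
    | mul y w _ _ hy hw =>
      obtain ⟨K₁, h₁⟩ := hy
      obtain ⟨K₂, h₂⟩ := hw
      refine ⟨K₁ + K₂, ?_⟩
      convert mul_mem h₂ (conj_mem (-K₂) h₁) using 1
      group
  obtain ⟨k, hk⟩ := upper y⁻¹
  obtain ⟨K, hK⟩ := upper y
  refine ⟨-k, K, ?_, hK⟩
  convert conj_mem k hk using 1
  group

end Group

theorem IsAmalgamatedProduct.closure_range_union_eq_top {G H X : Type} [Group G] [Group H]
    [Group X] {zG : G} {zH : H} {ιG : G →* X} {ιH : H →* X}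
    (ham : IsAmalgamatedProduct zG zH ιG ιH) :
    Subgroup.closure (Set.range ιG ∪ Set.range ιH) = ⊤ := by
  set L := Subgroup.closure (Set.range ιG ∪ Set.range ιH)
  have hG (a : G) : ιG a ∈ L := Subgroup.subset_closure (Or.inl ⟨a, rfl⟩)
  have hH (b : H) : ιH b ∈ L := Subgroup.subset_closure (Or.inr ⟨b, rfl⟩)
  obtain ⟨φ, ⟨hφG, hφH⟩, -⟩ :=
    ham.ind (ιG.codRestrict L hG) (ιH.codRestrict L hH) (Subtype.ext ham.eq)
  obtain ⟨ψ, -, huniq⟩ := ham.ind ιG ιH ham.eq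
  have hφ : L.subtype.comp φ = MonoidHom.id X := by
    refine (huniq _ ⟨?_, ?_⟩).trans (huniq _ ⟨ιG.id_comp, ιH.id_comp⟩).symm
    · rw [MonoidHom.comp_assoc, hφG]; rfl
    · rw [MonoidHom.comp_assoc, hφH]; rfl
  refine eq_top_iff.mpr fun y _ => ?_
  have hy : (φ y : X) = y := DFunLike.congr_fun hφ y
  exact hy ▸ (φ y).2

section Amalgam

variable {G H X : Type} [Group G] [Group H] [Group X] {m n : ℕ}

/-- The elements `x_i = g_i z_H⁻¹ h_1` of Theorem 1; indices start at `0`, so `h_1` is `h 0`. -/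
def chainGen (ιG : G →* X) (ιH : H →* X) (zH : H) (g : Fin (m + 1) → G)
    (h : Fin (n + 1) → H) (i : Fin (m + 1)) : X :=
  ιG (g i) * (ιH zH)⁻¹ * ιH (h 0)

/-- The positive cone of `<_X`. -/
def chainCone (ιG : G →* X) (ιH : H →* X) (zH : H) (g : Fin (m + 1) → G)
    (h : Fin (n + 1) → H) : Subsemigroup X :=
  Subsemigroup.closure (Set.range (chainGen ιG ιH zH g h) ∪ Set.range fun j => ιH (h j))

variable {ιG : G →* X} {ιH : H →* X} {zG : G} {zH : H}
  {g : Fin (m + 1) → G} {h : Fin (n + 1) → H}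

theorem chainGen_mem_chainCone (i : Fin (m + 1)) :
    chainGen ιG ιH zH g h i ∈ chainCone ιG ιH zH g h :=
  Subsemigroup.subset_closure (Or.inl ⟨i, rfl⟩)

theorem ιH_mem_chainCone_of_one_lt [LT H]
    (hhcone : {b : H | 1 < b} = Subsemigroup.closure (Set.range h)) {b : H} (hb : 1 < b) :
    ιH b ∈ chainCone ιG ιH zH g h := by
  refine map_mem_of_mem_closure ιH ?_ ((Set.ext_iff.mp hhcone b).mp hb)
  rintro _ ⟨j, rfl⟩
  exact Subsemigroup.subset_closure (Or.inr ⟨j, rfl⟩)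

section LeftOrderedFactor

variable [LinearOrder H] [MulLeftStrictMono H]

theorem inv_ιH_mul_ιH_mem_chainCone
    (hhcone : {b : H | 1 < b} = Subsemigroup.closure (Set.range h)) {b c : H} (hbc : b < c) :
    (ιH b)⁻¹ * ιH c ∈ chainCone ιG ιH zH g h := by
  rw [← map_inv, ← map_mul]
  exact ιH_mem_chainCone_of_one_lt hhcone (lt_inv_mul_iff_lt.mpr hbc)

theorem ιG_mem_chainCone_of_one_lt [LT G]
    (hgcone : {a : G | 1 < a} = Subsemigroup.closure (Set.range g))
    (hhcone : {b : H | 1 < b} = Subsemigroup.closure (Set.range h)) (hh₀ : h 0 < zH)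
    {a : G} (ha : 1 < a) : ιG a ∈ chainCone ιG ιH zH g h := by
  refine map_mem_of_mem_closure ιG ?_ ((Set.ext_iff.mp hgcone a).mp ha)
  rintro _ ⟨i, rfl⟩
  convert mul_mem (chainGen_mem_chainCone i) (inv_ιH_mul_ιH_mem_chainCone hhcone hh₀) using 1
  simp [chainGen, mul_assoc]

theorem conj_ιG_mem_chainCone [LT G]
    (hgcone : {a : G | 1 < a} = Subsemigroup.closure (Set.range g))
    (hhcone : {b : H | 1 < b} = Subsemigroup.closure (Set.range h)) (hh₀ : h 0 < zH)
    {a : G} (ha : 1 < a) :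
    ιH ((h 0)⁻¹ * zH) * ιG a * (ιH ((h 0)⁻¹ * zH))⁻¹ ∈ chainCone ιG ιH zH g h := by
  refine map_mem_of_mem_closure ((MulAut.conj (ιH ((h 0)⁻¹ * zH))).toMonoidHom.comp ιG) ?_
    ((Set.ext_iff.mp hgcone a).mp ha)
  rintro _ ⟨i, rfl⟩
  convert mul_mem (inv_ιH_mul_ιH_mem_chainCone hhcone hh₀) (chainGen_mem_chainCone i) using 1
  simp [chainGen]
  group

theorem inv_chainGen_mul_chainGen_mem [Preorder G] [MulLeftStrictMono G]
    (hgcone : {a : G | 1 < a} = Subsemigroup.closure (Set.range g))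
    (hhcone : {b : H | 1 < b} = Subsemigroup.closure (Set.range h)) (hh₀ : h 0 < zH)
    (hgmono : StrictMono g) {i j : Fin (m + 1)} (hij : i < j) :
    (chainGen ιG ιH zH g h i)⁻¹ * chainGen ιG ιH zH g h j ∈ chainCone ιG ιH zH g h := by
  convert conj_ιG_mem_chainCone hgcone hhcone hh₀ (lt_inv_mul_iff_lt.mpr (hgmono hij)) using 1
  simp [chainGen]
  group

theorem inv_chainGen_mul_ιH_mem [LT G] [MulLeftStrictMono G]
    (hgcone : {a : G | 1 < a} = Subsemigroup.closure (Set.range g))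
    (hhcone : {b : H | 1 < b} = Subsemigroup.closure (Set.range h)) (hh₀ : h 0 < zH)
    (hzG : ιG zG = ιH zH) (hhmono : Monotone h) {i : Fin (m + 1)} (hgi : g i < zG)
    (j : Fin (n + 1)) :
    (chainGen ιG ιH zH g h i)⁻¹ * ιH (h j) ∈ chainCone ιG ιH zH g h := by
  have hx₀ : (chainGen ιG ιH zH g h i)⁻¹ * ιH (h 0) ∈ chainCone ιG ιH zH g h := by
    convert conj_ιG_mem_chainCone hgcone hhcone hh₀ (lt_inv_mul_iff_lt.mpr hgi) using 1
    simp [chainGen, hzG]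
    group
  rcases (hhmono (Fin.zero_le j)).eq_or_lt with h₀j | h₀j
  · rwa [← h₀j]
  · exact inv_mul_mem_trans hx₀ (inv_ιH_mul_ιH_mem_chainCone hhcone h₀j)

end LeftOrderedFactor

theorem commute_chainGen (hcen : ∀ a : G, zG * a = a * zG) (hzG : ιG zG = ιH zH)
    (hh₀ : Commute zH (h 0)) (i : Fin (m + 1)) :
    Commute (ιH zH) (chainGen ιG ιH zH g h i) := by
  have hgi : Commute (ιH zH) (ιG (g i)) := hzG ▸ Commute.map (hcen (g i)) ιG
  exact (hgi.mul_right (Commute.refl _).inv_right).mul_right (hh₀.map ιH)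

theorem ιH_mem_normalizer_chainCone [LinearOrder H] [MulLeftStrictMono H]
    (hhcone : {b : H | 1 < b} = Subsemigroup.closure (Set.range h))
    (hcen : ∀ a : G, zG * a = a * zG) (hzG : ιG zG = ιH zH) (hzH : StrictMono (· * zH))
    (hh₀ : Commute zH (h 0)) :
    ιH zH ∈ Subgroup.normalizer (chainCone ιG ιH zH g h : Set X) := by
  have hN := mem_normalizer_one_lt_of_strictMono_mul_right hzH
  have hpos (j : Fin (n + 1)) : 1 < h j :=
    (Set.ext_iff.mp hhcone _).mpr (Subsemigroup.subset_closure ⟨j, rfl⟩)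
  apply mem_normalizer_closure_of_conj_mem
  · rintro _ (⟨i, rfl⟩ | ⟨j, rfl⟩)
    · rw [(commute_chainGen hcen hzG hh₀ i).mul_inv_cancel]
      exact chainGen_mem_chainCone i
    · rw [← map_inv, ← map_mul, ← map_mul]
      exact ιH_mem_chainCone_of_one_lt hhcone
        ((Subgroup.mem_set_normalizer_iff.mp hN _).mp (hpos j))
  · rintro _ (⟨i, rfl⟩ | ⟨j, rfl⟩)
    · rw [(commute_chainGen hcen hzG hh₀ i).inv_mul_cancel]
      exact chainGen_mem_chainCone i
    · rw [← map_inv, ← map_mul, ← map_mul]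
      exact ιH_mem_chainCone_of_one_lt hhcone
        ((Subgroup.mem_set_normalizer_iff''.mp hN _).mp (hpos j))

theorem exists_zpow_bounds_chainCone [LinearOrder G] [MulLeftStrictMono G] [LinearOrder H]
    [MulLeftStrictMono H] (ham : IsAmalgamatedProduct zG zH ιG ιH)
    (hgcone : {a : G | 1 < a} = Subsemigroup.closure (Set.range g))
    (hhcone : {b : H | 1 < b} = Subsemigroup.closure (Set.range h))
    (hcen : ∀ a : G, zG * a = a * zG) (hgz : ∀ i, g i < zG) (hhz : ∀ j, h j < zH)
    (hzH : StrictMono (· * zH))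
    (hN : ιH zH ∈ Subgroup.normalizer (chainCone ιG ιH zH g h : Set X)) (y : X) :
    ∃ k K : ℤ, (ιH zH ^ k)⁻¹ * y ∈ chainCone ιG ιH zH g h ∧
      y⁻¹ * ιH zH ^ K ∈ chainCone ιG ιH zH g h := by
  have hg₀ : 1 < g 0 := (Set.ext_iff.mp hgcone _).mpr (Subsemigroup.subset_closure ⟨0, rfl⟩)
  have hh₀ : 1 < h 0 := (Set.ext_iff.mp hhcone _).mpr (Subsemigroup.subset_closure ⟨0, rfl⟩)
  have hzG : StrictMono (· * zG) := fun a b hab => by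
    simpa only [← hcen] using mul_lt_mul_right hab zG
  have boundG (a : G) : ∃ K : ℤ, (ιG a)⁻¹ * ιH zH ^ K ∈ chainCone ιG ιH zH g h := by
    obtain ⟨r, hr⟩ := exists_lt_pow_of_eq_closure hgcone hzG (hg₀.trans (hgz 0))
      (by rintro _ ⟨i, rfl⟩; exact hgz i) a
    refine ⟨r, ?_⟩
    rw [zpow_natCast, ← ham.eq, ← map_pow, ← map_inv, ← map_mul]
    exact ιG_mem_chainCone_of_one_lt hgcone hhcone (hhz 0) (lt_inv_mul_iff_lt.mpr hr)
  have boundH (b : H) : ∃ K : ℤ, (ιH b)⁻¹ * ιH zH ^ K ∈ chainCone ιG ιH zH g h := by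
    obtain ⟨r, hr⟩ := exists_lt_pow_of_eq_closure hhcone hzH (hh₀.trans (hhz 0))
      (by rintro _ ⟨j, rfl⟩; exact hhz j) b
    refine ⟨r, ?_⟩
    rw [zpow_natCast, ← map_pow, ← map_inv, ← map_mul]
    exact ιH_mem_chainCone_of_one_lt hhcone (lt_inv_mul_iff_lt.mpr hr)
  refine exists_zpow_bounds_of_closure_eq_top ?_ hN ham.closure_range_union_eq_top ?_ ?_ y
  · exact ιH_mem_chainCone_of_one_lt hhcone (hh₀.trans (hhz 0))
  · rintro _ (⟨a, rfl⟩ | ⟨b, rfl⟩)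
    exacts [boundG a, boundH b]
  · rintro _ (⟨a, rfl⟩ | ⟨b, rfl⟩)
    · simpa using boundG a⁻¹
    · simpa using boundH b⁻¹

end Amalgam

theorem chain_cofinal_right_invariant_general
    {G H X : Type} [Group G] [Group H] [Group X]
    [LinearOrder G] [LinearOrder H]
    (hG : ∀ a b c : G, a < b → c * a < c * b)
    (hH : ∀ a b c : H, a < b → c * a < c * b)
    (zG : G) (zH : H)
    (hcen : ∀ a : G, zG * a = a * zG)
    (m n : ℕ) (g : Fin (m + 1) → G) (h : Fin (n + 1) → H)
    (hgmono : StrictMono g) (hhmono : StrictMono h)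
    (hgcone : {a : G | 1 < a} = (Subsemigroup.closure (Set.range g) : Set G))
    (hhcone : {a : H | 1 < a} = (Subsemigroup.closure (Set.range h) : Set H))
    (hCFG : ∀ i, g i < zG) (hCFH : ∀ j, h j < zH)
    (hINV : ∀ a b : H, a < b → a * zH < b * zH)
    (ιG : G →* X) (ιH : H →* X)
    (ham : IsAmalgamatedProduct zG zH ιG ιH)
    :
    let x : Fin (m + 1) → X := fun i => ιG (g i) * (ιH zH)⁻¹ * ιH (h 0)
    let PX : Subsemigroup X :=
      Subsemigroup.closure (Set.range x ∪ Set.range (fun j => ιH (h j)))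
    let ltX : X → X → Prop := fun a b => a⁻¹ * b ∈ PX
    (∀ i, ltX 1 (x i)) ∧
    (∀ i j, i < j → ltX (x i) (x j)) ∧
    (∀ i j, ltX (x i) (ιH (h j))) ∧
    (∀ i j, i < j → ltX (ιH (h i)) (ιH (h j))) ∧
    (∀ j, ltX (ιH (h j)) (ιH zH)) ∧
    ltX 1 (ιH zH) ∧
    (∀ y : X, ∃ k K : ℤ, ltX (ιH zH ^ k) y ∧ ltX y (ιH zH ^ K)) ∧
    (∀ a b : X, ltX a b → ltX (a * ιH zH) (b * ιH zH)) := by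
  intro x PX ltX
  have : MulLeftStrictMono G := ⟨fun c _ _ hab => hG _ _ c hab⟩
  have : MulLeftStrictMono H := ⟨fun c _ _ hab => hH _ _ c hab⟩
  have hzH : StrictMono (· * zH) := fun a b => hINV a b
  have hh₀ : IsLeast {b : H | 1 < b} (h 0) :=
    isLeast_one_lt_of_eq_closure hhcone ⟨0, rfl⟩
      (by rintro _ ⟨j, rfl⟩; exact hhmono.monotone (Fin.zero_le j))
  have hN : ιH zH ∈ Subgroup.normalizer (PX : Set X) :=
    ιH_mem_normalizer_chainCone hhcone hcen ham.eq hzH (commute_of_isLeast_one_lt hzH hh₀)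
  have hz₁ : 1 < zH := hh₀.1.trans (hCFH 0)
  refine ⟨fun i => by simp only [ltX, inv_one, one_mul]; exact chainGen_mem_chainCone i,
    fun i j hij => inv_chainGen_mul_chainGen_mem hgcone hhcone (hCFH 0) hgmono hij,
    fun i j => inv_chainGen_mul_ιH_mem hgcone hhcone (hCFH 0) ham.eq hhmono.monotone (hCFG i) j,
    fun i j hij => inv_ιH_mul_ιH_mem_chainCone hhcone (hhmono hij),
    fun j => inv_ιH_mul_ιH_mem_chainCone hhcone (hCFH j),
    by simp only [ltX, inv_one, one_mul]; exact ιH_mem_chainCone_of_one_lt hhcone hz₁,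
    exists_zpow_bounds_chainCone ham hgcone hhcone hcen hCFG hCFH hzH hN,
    fun a b hab => inv_mul_mul_mem_of_mem_normalizer hN hab⟩

theorem chain_cofinal_right_invariant
    {G H X : Type} [Group G] [Group H] [Group X]
    [LinearOrder G] [LinearOrder H]
    (hG : ∀ a b c : G, a < b → c * a < c * b)
    (hH : ∀ a b c : H, a < b → c * a < c * b)
    (zG : G) (zH : H) (hzG : zG ≠ 1) (hzH : zH ≠ 1)
    (hcen : ∀ a : G, zG * a = a * zG)
    (m n : ℕ) (g : Fin (m + 1) → G) (h : Fin (n + 1) → H)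
    (hgmono : StrictMono g) (hhmono : StrictMono h)
    (hgcone : {a : G | 1 < a} = (Subsemigroup.closure (Set.range g) : Set G))
    (hhcone : {a : H | 1 < a} = (Subsemigroup.closure (Set.range h) : Set H))
    (hCFG : ∀ i, g i < zG) (hCFH : ∀ j, h j < zH)
    (hINV : ∀ a b : H, a < b → a * zH < b * zH)
    (ιG : G →* X) (ιH : H →* X)
    (ham : IsAmalgamatedProduct zG zH ιG ιH)
    :
    let x : Fin (m + 1) → X := fun i => ιG (g i) * (ιH zH)⁻¹ * ιH (h 0)
    let PX : Subsemigroup X :=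
      Subsemigroup.closure (Set.range x ∪ Set.range (fun j => ιH (h j)))
    let ltX : X → X → Prop := fun a b => a⁻¹ * b ∈ PX
    (∀ i, ltX 1 (x i)) ∧
    (∀ i j, i < j → ltX (x i) (x j)) ∧
    (∀ i j, ltX (x i) (ιH (h j))) ∧
    (∀ i j, i < j → ltX (ιH (h i)) (ιH (h j))) ∧
    (∀ j, ltX (ιH (h j)) (ιH zH)) ∧
    ltX 1 (ιH zH) ∧
    (∀ y : X, ∃ k K : ℤ, ltX (ιH zH ^ k) y ∧ ltX y (ιH zH ^ K)) ∧
    (∀ a b : X, ltX a b → ltX (a * ιH zH) (b * ιH zH)) :=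
  chain_cofinal_right_invariant_general hG hH zG zH hcen m n g h hgmono hhmono hgcone hhcone hCFG
    hCFH hINV ιG ιH ham
end

section
/- In the setting of Theorem 1, for all indices i, j one has h_j⁻¹ x_i = N Δ_H⁻¹ in X, where N is a product of inverses of elements of {x_1,...,x_m, h_1,...,h_n} (an {𝒳,ℋ}-negative word), Δ_H = z_H h_1⁻¹; consequently x_i <_X h_j for all i, j. -/
theorem key_negative_word_identity
    {G H X : Type} [Group G] [Group H] [Group X]
    [LinearOrder G] [LinearOrder H]
    (hG : ∀ a b c : G, a < b → c * a < c * b)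
    (hH : ∀ a b c : H, a < b → c * a < c * b)
    (zG : G) (zH : H) (hzG : zG ≠ 1) (hzH : zH ≠ 1)
    (hcen : ∀ a : G, zG * a = a * zG)
    (m n : ℕ) (g : Fin (m + 1) → G) (h : Fin (n + 1) → H)
    (hgmono : StrictMono g) (hhmono : StrictMono h)
    (hgcone : {a : G | 1 < a} = (Subsemigroup.closure (Set.range g) : Set G))
    (hhcone : {a : H | 1 < a} = (Subsemigroup.closure (Set.range h) : Set H))
    (hCFG : ∀ i, g i < zG) (hCFH : ∀ j, h j < zH)
    (hINV : ∀ a b : H, a < b → a * zH < b * zH)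
    (ιG : G →* X) (ιH : H →* X)
    (ham : IsAmalgamatedProduct zG zH ιG ιH)
    :
    let x : Fin (m + 1) → X := fun i => ιG (g i) * (ιH zH)⁻¹ * ιH (h 0)
    let S : Set X := Set.range x ∪ Set.range (fun j => ιH (h j))
    ∀ i j,
      (∃ N ∈ Subsemigroup.closure S⁻¹,
        (ιH (h j))⁻¹ * x i = N * (ιH (zH * (h 0)⁻¹))⁻¹) ∧
      (x i)⁻¹ * ιH (h j) ∈ Subsemigroup.closure S := by
  intro x S i j
  have hamq : ιG zG = ιH zH := ham.eq
  -- positivity of generators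
  have hhpos : ∀ k, (1 : H) < h k := by
    intro k
    have : h k ∈ {a : H | 1 < a} := by
      rw [hhcone]; exact Subsemigroup.subset_closure ⟨k, rfl⟩
    exact this
  -- h 0 is minimal positive
  have hminaux : ∀ p : H, p ∈ Subsemigroup.closure (Set.range h) → h 0 ≤ p ∧ 1 < p := by
    intro p hp
    induction hp using Subsemigroup.closure_induction with
    | mem q hq =>
      obtain ⟨k, rfl⟩ := hq
      exact ⟨hhmono.monotone (Fin.zero_le k), hhpos k⟩
    | mul u v hu hv ihu ihv =>
      have huv : u < u * v := by
        have := hH 1 v u ihv.2; simpa using this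
      exact ⟨ihu.1.trans huv.le, lt_trans ihu.2 huv⟩
  have hmin : ∀ p : H, 1 < p → h 0 ≤ p := by
    intro p hp
    have hp' : p ∈ (Subsemigroup.closure (Set.range h) : Set H) := by
      rw [← hhcone]; exact hp
    exact (hminaux p hp').1
  -- right multiplication by zH reflects the order
  have hINV' : ∀ a b : H, a * zH < b * zH → a < b := by
    intro a b hab
    by_contra hc
    push_neg at hc
    rcases hc.lt_or_eq with h1 | h1
    · exact lt_asymm hab (hINV b a h1)
    · subst h1; exact lt_irrefl _ hab
  -- zH commutes with h 0
  have hcomm : zH * h 0 = h 0 * zH := by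
    have hA : (1 : H) < zH⁻¹ * h 0 * zH := by
      have h1 : 1 * zH < h 0 * zH := hINV 1 (h 0) (hhpos 0)
      have h2 := hH (1 * zH) (h 0 * zH) zH⁻¹ h1
      calc (1 : H) = zH⁻¹ * (1 * zH) := by group
        _ < zH⁻¹ * (h 0 * zH) := h2
        _ = zH⁻¹ * h 0 * zH := by rw [mul_assoc]
    have hB : (1 : H) < zH * h 0 * zH⁻¹ := by
      apply hINV' 1 (zH * h 0 * zH⁻¹)
      have h1 := hH 1 (h 0) zH (hhpos 0)
      calc (1 : H) * zH = zH * 1 := by group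
        _ < zH * h 0 := h1
        _ = zH * h 0 * zH⁻¹ * zH := by group
    have h1 : h 0 ≤ zH⁻¹ * h 0 * zH := hmin _ hA
    have h2 : h 0 ≤ zH * h 0 * zH⁻¹ := hmin _ hB
    have h3 : zH⁻¹ * h 0 * zH ≤ h 0 := by
      rcases h2.lt_or_eq with h4 | h4
      · have h5 := hH (h 0 * zH) (zH * h 0 * zH⁻¹ * zH) zH⁻¹ (hINV _ _ h4)
        calc zH⁻¹ * h 0 * zH = zH⁻¹ * (h 0 * zH) := by rw [mul_assoc]
          _ ≤ zH⁻¹ * (zH * h 0 * zH⁻¹ * zH) := h5.le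
          _ = h 0 := by group
      · have h5 : zH⁻¹ * h 0 * zH = zH⁻¹ * (zH * h 0 * zH⁻¹) * zH := by rw [← h4]
        exact (h5.trans (by group : zH⁻¹ * (zH * h 0 * zH⁻¹) * zH = h 0)).le
    have h6 : zH⁻¹ * h 0 * zH = h 0 := le_antisymm h3 h1
    calc zH * h 0 = zH * (zH⁻¹ * h 0 * zH) := by rw [h6]
      _ = h 0 * zH := by group
  have cX : ιH zH * ιH (h 0) = ιH (h 0) * ιH zH := by
    rw [← map_mul, ← map_mul, hcomm]
  -- positive elements of H map into the closure
  have hhj : ∀ p : H, 1 < p → ιH p ∈ Subsemigroup.closure S := by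
    intro p hp
    have hp' : p ∈ (Subsemigroup.closure (Set.range h) : Set H) := by
      rw [← hhcone]; exact hp
    clear hp
    induction hp' using Subsemigroup.closure_induction with
    | mem q hq =>
      obtain ⟨k, rfl⟩ := hq
      exact Subsemigroup.subset_closure (Or.inr ⟨k, rfl⟩)
    | mul u v hu hv ihu ihv =>
      rw [map_mul]; exact mul_mem ihu ihv
  have h0z : (1 : H) < (h 0)⁻¹ * zH := by
    have := hH (h 0) zH (h 0)⁻¹ (hCFH 0)
    simpa using this
  -- the "y" lemma
  have hY : ∀ γ : G, 1 < γ → ιG γ * (ιH zH)⁻¹ * ιH (h 0) ∈ Subsemigroup.closure S := by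
    intro γ hγ
    have hγ' : γ ∈ (Subsemigroup.closure (Set.range g) : Set G) := by
      rw [← hgcone]; exact hγ
    clear hγ
    induction hγ' using Subsemigroup.closure_induction with
    | mem q hq =>
      obtain ⟨k, rfl⟩ := hq
      exact Subsemigroup.subset_closure (Or.inl ⟨k, rfl⟩)
    | mul u v hu hv ihu ihv =>
      have key : ιG (u * v) * (ιH zH)⁻¹ * ιH (h 0) =
          (ιG u * (ιH zH)⁻¹ * ιH (h 0)) * ιH ((h 0)⁻¹ * zH) *
            (ιG v * (ιH zH)⁻¹ * ιH (h 0)) := by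
        rw [map_mul, map_mul, map_inv]; group
      rw [key]
      exact mul_mem (mul_mem ihu (hhj _ h0z)) ihv
  -- the bracket: ιG (g i)⁻¹ * ιH (h j) ∈ closure S
  have hgizpos : (1 : G) < (g i)⁻¹ * zG := by
    have : g i ∈ {a : G | 1 < a} := by
      rw [hgcone]; exact Subsemigroup.subset_closure ⟨i, rfl⟩
    have := hG (g i) zG (g i)⁻¹ (hCFG i)
    simpa using this
  have hbr : (ιG (g i))⁻¹ * ιH (h j) ∈ Subsemigroup.closure S := by
    have hy := hY _ hgizpos
    rcases eq_or_ne j 0 with rfl | hj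
    · have e : (ιG (g i))⁻¹ * ιH (h 0) =
          ιG ((g i)⁻¹ * zG) * (ιH zH)⁻¹ * ιH (h 0) := by
        rw [map_mul, map_inv, hamq]; group
      rw [e]; exact hy
    · have hj0 : h 0 < h j := hhmono (Fin.pos_iff_ne_zero.mpr hj)
      have hjpos : (1 : H) < (h 0)⁻¹ * h j := by
        have := hH (h 0) (h j) (h 0)⁻¹ hj0
        simpa using this
      have e : (ιG (g i))⁻¹ * ιH (h j) =
          (ιG ((g i)⁻¹ * zG) * (ιH zH)⁻¹ * ιH (h 0)) * ιH ((h 0)⁻¹ * h j) := by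
        rw [map_mul, map_inv, map_mul, map_inv, hamq]; group
      rw [e]; exact mul_mem hy (hhj _ hjpos)
  -- inversion sends closure S into closure S⁻¹
  have hinvmem : ∀ u : X, u ∈ Subsemigroup.closure S →
      u⁻¹ ∈ Subsemigroup.closure S⁻¹ := by
    intro u hu
    induction hu using Subsemigroup.closure_induction with
    | mem q hq =>
      exact Subsemigroup.subset_closure (by simpa [Set.mem_inv] using hq)
    | mul u v hu hv ihu ihv =>
      rw [mul_inv_rev]; exact mul_mem ihv ihu
  -- key simplification: x i * ιH (zH * (h 0)⁻¹) = ιG (g i)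
  have e1 : x i * ιH (zH * (h 0)⁻¹) = ιG (g i) := by
    show ιG (g i) * (ιH zH)⁻¹ * ιH (h 0) * ιH (zH * (h 0)⁻¹) = ιG (g i)
    rw [map_mul, map_inv]
    calc ιG (g i) * (ιH zH)⁻¹ * ιH (h 0) * (ιH zH * (ιH (h 0))⁻¹)
        = ιG (g i) * (ιH zH)⁻¹ * ((ιH zH * ιH (h 0)) * (ιH (h 0))⁻¹) := by
          rw [cX]; group
      _ = ιG (g i) := by group
  constructor
  · refine ⟨(ιH (h j))⁻¹ * ιG (g i), ?_, ?_⟩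
    · have : ((ιG (g i))⁻¹ * ιH (h j))⁻¹ = (ιH (h j))⁻¹ * ιG (g i) := by group
      rw [← this]
      exact hinvmem _ hbr
    · rw [← e1]; group
  · have e2 : (x i)⁻¹ * ιH (h j) =
        ιH ((h 0)⁻¹ * zH) * ((ιG (g i))⁻¹ * ιH (h j)) := by
      show (ιG (g i) * (ιH zH)⁻¹ * ιH (h 0))⁻¹ * ιH (h j) =
        ιH ((h 0)⁻¹ * zH) * ((ιG (g i))⁻¹ * ιH (h j))
      rw [map_mul, map_inv]; group
    rw [e2]
    exact mul_mem (hhj _ h0z) hbr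
end

section
/- In G_{m,n} = ⟨b, c | b^m = c^n⟩ with the isolated ordering <_{m,n} whose positive cone is generated by {b c^{1−n}, c}, the element bc satisfies b^m <_{m,n} bc <_{m,n} b^{2m}; since b^m is a <_{m,n}-cofinal central element, bc is <_{m,n}-positive cofinal, and <_{m,n} is right invariant under multiplication by bc. -/
/-- The relation `b^m = c^n` defining `G_{m,n} = ⟨b, c | b^m = c^n⟩`,
where `b` is `of true` and `c` is `of false`. -/
def relsG (m n : ℕ) : Set (FreeGroup Bool) :=
  {FreeGroup.of true ^ m * (FreeGroup.of false ^ n)⁻¹}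

/-- `b` in `G_{m,n}`. -/
def bG (m n : ℕ) : PresentedGroup (relsG m n) := PresentedGroup.of true

/-- `c` in `G_{m,n}`. -/
def cG (m n : ℕ) : PresentedGroup (relsG m n) := PresentedGroup.of false

/-!
Put `a = b c^{1-n}` and `z = b^m = c^n`. The positive cone is generated by `a` and `c`, the element
`z` commutes with both, and `bc = z a`. Hence conjugation by `bc` is conjugation by `a`, which fixes
`a` and sends `c` to `(c^{n-1} a)^{m-1} a`; it therefore preserves the positive cone, and this is
right invariance of the order under `bc`. Both generators lie below `bc`, and right invariance
lets a bound `g < (bc)^k` pass to products, so every positive element, and then every element,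
lies between two powers of `bc`. The comparisons with `b^m` and `b^{2m}` come from
`z⁻¹ (bc) = a` and `(bc)⁻¹ z² = c^{n-1} b^{m-1}`.
-/

section LeftInvariant

variable {G : Type*} [Group G] {r : G → G → Prop} {S : Set G}

def LeftInvariant (r : G → G → Prop) : Prop :=
  ∀ a b c : G, r a b → r (c * a) (c * b)

def ZPowersCofinal (r : G → G → Prop) (w : G) : Prop :=
  ∀ y : G, ∃ k K : ℤ, r (w ^ k) y ∧ r y (w ^ K)

theorem LeftInvariant.rel_iff_one_rel_inv_mul (hr : LeftInvariant r) {x y : G} :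
    r x y ↔ r 1 (x⁻¹ * y) :=
  ⟨fun h => by simpa using hr _ _ x⁻¹ h, fun h => by simpa using hr _ _ x h⟩

theorem LeftInvariant.rel_one_iff (hr : LeftInvariant r) {x : G} : r x 1 ↔ r 1 x⁻¹ := by
  simpa using hr.rel_iff_one_rel_inv_mul (x := x) (y := 1)

theorem LeftInvariant.one_rel_mul [IsTrans G r] (hr : LeftInvariant r) {x y : G}
    (hx : r 1 x) (hy : r 1 y) : r 1 (x * y) :=
  _root_.trans hx (by simpa using hr _ _ x hy)

theorem LeftInvariant.one_rel_pow_mul [IsTrans G r] (hr : LeftInvariant r) {x y : G}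
    (hx : r 1 x) (hy : r 1 y) (n : ℕ) : r 1 (x ^ n * y) := by
  induction n with
  | zero => simpa using hy
  | succ n ih => simpa only [pow_succ', mul_assoc] using hr.one_rel_mul hx ih

theorem LeftInvariant.one_rel_mul_pow [IsTrans G r] (hr : LeftInvariant r) {x y : G}
    (hx : r 1 x) (hy : r 1 y) (n : ℕ) : r 1 (x * y ^ n) := by
  induction n with
  | zero => simpa using hx
  | succ n ih => simpa only [pow_succ, mul_assoc] using hr.one_rel_mul ih hy

theorem rel_mul_pow_right {w : G} (hw : ∀ x y, r x y → r (x * w) (y * w)) (k : ℕ) {x y : G}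
    (h : r x y) : r (x * w ^ k) (y * w ^ k) := by
  induction k with
  | zero => simpa using h
  | succ k ih => simpa only [pow_succ, mul_assoc] using hw _ _ ih

theorem one_rel_of_mem (hcone : {g | r 1 g} = (Subsemigroup.closure S : Set G)) {s : G}
    (hs : s ∈ S) : r 1 s := by
  have : s ∈ (Subsemigroup.closure S : Set G) := Subsemigroup.subset_closure hs
  rwa [← hcone] at this

theorem mem_of_one_rel (hcone : {g | r 1 g} = (Subsemigroup.closure S : Set G))
    {T : Subsemigroup G} (hST : S ⊆ T) {g : G} (hg : r 1 g) : g ∈ T := by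
  have : g ∈ (Subsemigroup.closure S : Set G) := hcone ▸ hg
  exact Subsemigroup.closure_le.mpr hST this

theorem LeftInvariant.rel_mul_right_of_forall_mem [IsTrans G r] (hr : LeftInvariant r)
    (hcone : {g | r 1 g} = (Subsemigroup.closure S : Set G)) {w : G}
    (hS : ∀ s ∈ S, r 1 (w⁻¹ * s * w)) {x y : G} (h : r x y) : r (x * w) (y * w) := by
  let T : Subsemigroup G :=
    { carrier := {g | r 1 (w⁻¹ * g * w)}
      mul_mem' := fun {g h} hg hh => by
        have := hr.one_rel_mul hg hh
        show r 1 (w⁻¹ * (g * h) * w)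
        simpa only [mul_assoc, mul_inv_cancel_left] using this }
  have : r 1 (w⁻¹ * (x⁻¹ * y) * w) :=
    mem_of_one_rel hcone (T := T) hS (hr.rel_iff_one_rel_inv_mul.mp h)
  rw [hr.rel_iff_one_rel_inv_mul]
  simpa [mul_assoc] using this

theorem LeftInvariant.zPowersCofinal_of_forall_mem [IsStrictTotalOrder G r]
    (hr : LeftInvariant r) (hcone : {g | r 1 g} = (Subsemigroup.closure S : Set G)) {w : G}
    (hw1 : r 1 w) (hw : ∀ x y, r x y → r (x * w) (y * w)) (hS : ∀ s ∈ S, r s w) :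
    ZPowersCofinal r w := by
  let T : Subsemigroup G :=
    { carrier := {g | ∃ k : ℕ, r g (w ^ k)}
      mul_mem' := by
        rintro x y ⟨k, hk⟩ ⟨l, hl⟩
        refine ⟨k + l, _root_.trans (hr _ _ x hl) ?_⟩
        rw [pow_add]
        exact rel_mul_pow_right hw l hk }
  have hbound : ∀ g, r 1 g → ∃ k : ℕ, r g (w ^ k) :=
    fun g hg => mem_of_one_rel hcone (T := T) (fun s hs => ⟨1, by simpa using hS s hs⟩) hg
  have hw_inv : r (w ^ (-1 : ℤ)) 1 := by rwa [zpow_neg_one, hr.rel_one_iff, inv_inv]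
  intro y
  rcases trichotomous_of r 1 y with hy | rfl | hy
  · obtain ⟨k, hk⟩ := hbound y hy
    exact ⟨-1, k, _root_.trans hw_inv hy, by exact_mod_cast hk⟩
  · exact ⟨-1, 1, hw_inv, by simpa using hw1⟩
  · obtain ⟨k, hk⟩ := hbound y⁻¹ (hr.rel_one_iff.mp hy)
    refine ⟨-k, 1, ?_, _root_.trans hy (by simpa using hw1)⟩
    have : r (w ^ (-k : ℤ) * w ^ k) (y * w ^ k) := by simpa using hr _ _ y hk
    -- a strictly monotone map out of a total order reflects the order
    exact (RelEmbedding.ofMonotone (· * w ^ k) fun _ _ => rel_mul_pow_right hw k).map_rel_iff.mp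
      this

end LeftInvariant

section PowEqPow

variable {G : Type*} [Group G] {r : G → G → Prop} {a b c : G} {m n : ℕ}

-- The exponents are shifted: `b ^ (m + 1) = c ^ (n + 1)` is the paper's `G_{m+1,n+1}`, and
-- `a = b c^{-n}` its generator `b c^{1-(n+1)}`; this keeps `ℕ`-subtraction out of the exponents.

theorem mul_eq_pow_mul_of_pow_eq_pow (hbc : b ^ (m + 1) = c ^ (n + 1))
    (ha : a = b * (c ^ n)⁻¹) : b * c = b ^ (m + 1) * a := by
  rw [ha, ← mul_assoc, ← pow_succ, pow_succ', hbc]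
  group

theorem commute_mul_of_pow_eq_pow (hbc : b ^ (m + 1) = c ^ (n + 1)) (ha : a = b * (c ^ n)⁻¹) :
    Commute a (b * c) := by
  have hzc : Commute (b ^ (m + 1)) c := hbc ▸ Commute.pow_self c (n + 1)
  have hza : Commute (b ^ (m + 1)) a := by
    rw [ha]
    exact (Commute.pow_self b _).mul_right (hzc.pow_right n).inv_right
  rw [mul_eq_pow_mul_of_pow_eq_pow hbc ha]
  exact hza.symm.mul_right (Commute.refl a)

theorem conj_mul_of_pow_eq_pow (hbc : b ^ (m + 1) = c ^ (n + 1)) (ha : a = b * (c ^ n)⁻¹) :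
    (b * c)⁻¹ * c * (b * c) = (c ^ n * a) ^ m * a := by
  have hbm : b ^ m = b⁻¹ * c ^ (n + 1) := by rw [← hbc]; group
  have hpow : (c ^ n * a) ^ m = c ^ n * b ^ m * (c ^ n)⁻¹ := by rw [ha, ← mul_assoc, conj_pow]
  rw [mul_eq_pow_mul_of_pow_eq_pow hbc ha, hbc, hpow, hbm, ha]
  group

theorem pow_rel_mul_of_pow_eq_pow (hr : LeftInvariant r) (ha1 : r 1 a)
    (hbc : b ^ (m + 1) = c ^ (n + 1)) (ha : a = b * (c ^ n)⁻¹) : r (b ^ (m + 1)) (b * c) := by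
  rwa [hr.rel_iff_one_rel_inv_mul, mul_eq_pow_mul_of_pow_eq_pow hbc ha, inv_mul_cancel_left]

variable [IsTrans G r]

theorem one_rel_of_eq_mul_inv_pow (hr : LeftInvariant r) (ha1 : r 1 a) (hc1 : r 1 c)
    (ha : a = b * (c ^ n)⁻¹) : r 1 b := by
  rw [show b = a * c ^ n by rw [ha]; group]
  exact hr.one_rel_mul_pow ha1 hc1 n

theorem one_rel_mul_of_pow_eq_pow (hr : LeftInvariant r) (ha1 : r 1 a) (hc1 : r 1 c)
    (hbc : b ^ (m + 1) = c ^ (n + 1)) (ha : a = b * (c ^ n)⁻¹) : r 1 (b * c) := by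
  rw [mul_eq_pow_mul_of_pow_eq_pow hbc ha, hbc]
  exact hr.one_rel_pow_mul hc1 ha1 _

theorem mul_rel_pow_two_mul_of_pow_eq_pow (hr : LeftInvariant r) (ha1 : r 1 a) (hc1 : r 1 c)
    (hbc : b ^ (m + 1) = c ^ (n + 1)) (ha : a = b * (c ^ n)⁻¹) (hm : m ≠ 0) :
    r (b * c) (b ^ (2 * (m + 1))) := by
  obtain ⟨k, rfl⟩ := Nat.exists_eq_succ_of_ne_zero hm
  have hb1 := one_rel_of_eq_mul_inv_pow hr ha1 hc1 ha
  have key : (b * c)⁻¹ * b ^ (2 * (k + 1 + 1)) = c ^ n * b * b ^ k := by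
    rw [mul_eq_pow_mul_of_pow_eq_pow hbc ha, ha]
    group
  rw [hr.rel_iff_one_rel_inv_mul, key]
  exact hr.one_rel_mul_pow (hr.one_rel_pow_mul hc1 hb1 n) hb1 k

theorem rel_mul_of_eq_mul_inv_pow (hr : LeftInvariant r) (hc1 : r 1 c)
    (ha : a = b * (c ^ n)⁻¹) : r a (b * c) := by
  rw [hr.rel_iff_one_rel_inv_mul, show a⁻¹ * (b * c) = c ^ n * c by rw [ha]; group]
  exact hr.one_rel_pow_mul hc1 hc1 n

theorem rel_mul_of_pow_eq_pow (hr : LeftInvariant r) (ha1 : r 1 a) (hc1 : r 1 c)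
    (hbc : b ^ (m + 1) = c ^ (n + 1)) (ha : a = b * (c ^ n)⁻¹) : r c (b * c) := by
  rw [hr.rel_iff_one_rel_inv_mul, mul_eq_pow_mul_of_pow_eq_pow hbc ha, hbc,
    show c⁻¹ * (c ^ (n + 1) * a) = c ^ n * a by group]
  exact hr.one_rel_pow_mul hc1 ha1 n

theorem one_rel_conj_mul_of_pow_eq_pow (hr : LeftInvariant r) (ha1 : r 1 a) (hc1 : r 1 c)
    (hbc : b ^ (m + 1) = c ^ (n + 1)) (ha : a = b * (c ^ n)⁻¹) :
    r 1 ((b * c)⁻¹ * c * (b * c)) := by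
  rw [conj_mul_of_pow_eq_pow hbc ha]
  exact hr.one_rel_pow_mul (hr.one_rel_pow_mul hc1 ha1 n) ha1 m

end PowEqPow

theorem bG_pow_eq_cG_pow (m n : ℕ) : bG m n ^ m = cG m n ^ n :=
  PresentedGroup.mk_eq_mk_of_mul_inv_mem (rels := relsG m n) rfl

theorem bc_cofinal_right_invariant (m n : ℕ) (hm : 2 ≤ m) (hn : 2 ≤ n)
    (r : PresentedGroup (relsG m n) → PresentedGroup (relsG m n) → Prop)
    (hsto : IsStrictTotalOrder (PresentedGroup (relsG m n)) r)
    (hleft : ∀ a b c, r a b → r (c * a) (c * b))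
    (hcone : {g | r 1 g} =
      (Subsemigroup.closure {bG m n * cG m n ^ ((1 : ℤ) - n), cG m n} :
        Set (PresentedGroup (relsG m n)))) :
    r (bG m n ^ m) (bG m n * cG m n) ∧
    r (bG m n * cG m n) (bG m n ^ (2 * m)) ∧
    r 1 (bG m n * cG m n) ∧
    (∀ y : PresentedGroup (relsG m n),
      ∃ k K : ℤ, r ((bG m n * cG m n) ^ k) y ∧ r y ((bG m n * cG m n) ^ K)) ∧
    (∀ a a', r a a' → r (a * (bG m n * cG m n)) (a' * (bG m n * cG m n))) := by
  obtain ⟨m, rfl⟩ : ∃ k, m = k + 1 := ⟨m - 1, by omega⟩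
  obtain ⟨n, rfl⟩ : ∃ k, n = k + 1 := ⟨n - 1, by omega⟩
  have hr : LeftInvariant r := hleft
  have hbc := bG_pow_eq_cG_pow (m + 1) (n + 1)
  set b := bG (m + 1) (n + 1)
  set c := cG (m + 1) (n + 1)
  set a := b * c ^ ((1 : ℤ) - ↑(n + 1)) with ha_def
  have ha : a = b * (c ^ n)⁻¹ := by
    rw [ha_def, show (1 : ℤ) - ↑(n + 1) = -↑n by push_cast; ring, zpow_neg, zpow_natCast]
  have ha1 : r 1 a := one_rel_of_mem hcone (by simp)
  have hc1 : r 1 c := one_rel_of_mem hcone (by simp)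
  have hw1 := one_rel_mul_of_pow_eq_pow hr ha1 hc1 hbc ha
  have hright : ∀ x y, r x y → r (x * (b * c)) (y * (b * c)) := by
    refine fun x y => hr.rel_mul_right_of_forall_mem hcone ?_
    rintro s (rfl | rfl)
    · rwa [mul_assoc, (commute_mul_of_pow_eq_pow hbc ha).eq, inv_mul_cancel_left]
    · exact one_rel_conj_mul_of_pow_eq_pow hr ha1 hc1 hbc ha
  refine ⟨pow_rel_mul_of_pow_eq_pow hr ha1 hbc ha,
    mul_rel_pow_two_mul_of_pow_eq_pow hr ha1 hc1 hbc ha (by omega), hw1,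
    hr.zPowersCofinal_of_forall_mem hcone hw1 hright ?_, hright⟩
  rintro s (rfl | rfl)
  · exact rel_mul_of_eq_mul_inv_pow hr hc1 ha
  · exact rel_mul_of_pow_eq_pow hr ha1 hc1 hbc ha
end
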